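/- arXiv:2306.10600 — 4 statements merged into one kernel-verified Lean document; each statement's English description precedes it below -/
import Mathlib

section
/- Let X_1, ..., X_μ be independent φ-smooth random variables taking values in [0,1] (with φ ≥ 1 and μ a positive integer). Then for any reals α ≥ 1 and β ≥ 0, E[ min{ max_{i∈[μ]} α/X_i , μ^β } ] ≤ φ·α·(β+1)·μ·ln(μ) + 1. -/
open MeasureTheory ProbabilityTheory

lemma ofReal_max_zero (a : ℝ) : ENNReal.ofReal (max a 0) = ENNReal.ofReal a := by
  rcases le_total 0 a with h | h
  · rw [max_eq_left h]
  · rw [max_eq_right h, ENNReal.ofReal_zero, Eq.comm, ENNReal.ofReal_eq_zero]; exact h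

lemma key_integral_bound {α T : ℝ} (hα : 1 ≤ α) (hT : 1 ≤ T) :
    ∫⁻ x in Set.Icc (0:ℝ) 1, ENNReal.ofReal (max (min (α / x) T - 1) 0)
      ≤ ENNReal.ofReal (α * Real.log T) := by
  have hT0 : (0:ℝ) < T := by linarith
  have hα0 : (0:ℝ) < α := by linarith
  set c : ℝ := min (α / T) 1 with hc
  have hc0 : 0 < c := lt_min (div_pos hα0 hT0) one_pos
  have hc1 : c ≤ 1 := min_le_right _ _
  have hIcc : (∫⁻ x in Set.Icc (0:ℝ) 1, ENNReal.ofReal (max (min (α / x) T - 1) 0))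
      = ∫⁻ x in Set.Ioc (0:ℝ) 1, ENNReal.ofReal (min (α / x) T - 1) := by
    rw [setLIntegral_congr (Ioc_ae_eq_Icc (α := ℝ) (a := 0) (b := 1)).symm]
    exact lintegral_congr fun x => ofReal_max_zero _
  rw [hIcc]
  have hsplit : Set.Ioc (0:ℝ) 1 = Set.Ioc 0 c ∪ Set.Ioc c 1 :=
    (Set.Ioc_union_Ioc_eq_Ioc hc0.le hc1).symm
  rw [hsplit, lintegral_union measurableSet_Ioc (Set.Ioc_disjoint_Ioc_of_le le_rfl)]
  have h1 : (∫⁻ x in Set.Ioc (0:ℝ) c, ENNReal.ofReal (min (α / x) T - 1))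
      ≤ ENNReal.ofReal ((T - 1) * c) := by
    calc (∫⁻ x in Set.Ioc (0:ℝ) c, ENNReal.ofReal (min (α / x) T - 1))
        ≤ ∫⁻ _x in Set.Ioc (0:ℝ) c, ENNReal.ofReal (T - 1) := by
          refine setLIntegral_mono measurable_const (fun x _ => ?_)
          exact ENNReal.ofReal_le_ofReal (by have := min_le_right (α/x) T; linarith)
      _ = ENNReal.ofReal (T-1) * volume (Set.Ioc (0:ℝ) c) := setLIntegral_const _ _
      _ = ENNReal.ofReal ((T-1)*c) := by
          rw [Real.volume_Ioc, sub_zero, ← ENNReal.ofReal_mul (by linarith)]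
  -- second piece
  have hdivint : IntervalIntegrable (fun x => α / x) volume c 1 := by
    apply ContinuousOn.intervalIntegrable
    apply continuousOn_const.div continuousOn_id
    intro x hx
    rw [Set.uIcc_of_le hc1] at hx
    exact ne_of_gt (lt_of_lt_of_le hc0 hx.1)
  have hint : IntervalIntegrable (fun x => α / x - 1) volume c 1 :=
    hdivint.sub intervalIntegrable_const
  have h2val : ∫ x in Set.Ioc c 1, (α / x - 1) = α * Real.log (1/c) - (1 - c) := by
    rw [← intervalIntegral.integral_of_le hc1,
      intervalIntegral.integral_sub hdivint intervalIntegrable_const]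
    have h0 : (0:ℝ) ∉ Set.uIcc c 1 := by
      rw [Set.uIcc_of_le hc1]; intro h; exact absurd h.1 (not_le.mpr hc0)
    have : ∫ x in c..1, α / x = α * Real.log (1/c) := by
      simp_rw [div_eq_mul_one_div α]
      rw [intervalIntegral.integral_const_mul, integral_one_div h0]
    rw [this, intervalIntegral.integral_const]
    simp
  have h2 : (∫⁻ x in Set.Ioc c 1, ENNReal.ofReal (min (α / x) T - 1))
      ≤ ENNReal.ofReal (α * Real.log (1/c) - (1 - c)) := by
    have hnn : 0 ≤ᵐ[volume.restrict (Set.Ioc c 1)] fun x => α / x - 1 := by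
      refine (ae_restrict_iff' measurableSet_Ioc).mpr (ae_of_all _ fun x hx => ?_)
      have h5 : 1 ≤ α / x := (one_le_div (lt_of_lt_of_le hc0 hx.1.le)).mpr (hx.2.trans hα)
      show (0:ℝ) ≤ α / x - 1
      linarith
    have hIntOn : IntegrableOn (fun x => α / x - 1) (Set.Ioc c 1) volume :=
      (intervalIntegrable_iff_integrableOn_Ioc_of_le hc1).mp hint
    calc (∫⁻ x in Set.Ioc c 1, ENNReal.ofReal (min (α / x) T - 1))
        ≤ ∫⁻ x in Set.Ioc c 1, ENNReal.ofReal (α / x - 1) := by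
          refine setLIntegral_mono (((measurable_const.div measurable_id).sub
            measurable_const).ennreal_ofReal) (fun x _ => ?_)
          exact ENNReal.ofReal_le_ofReal (by have := min_le_left (α/x) T; linarith)
      _ = ENNReal.ofReal (∫ x in Set.Ioc c 1, (α / x - 1)) :=
          (ofReal_integral_eq_lintegral_ofReal hIntOn hnn).symm
      _ = _ := by rw [h2val]
  have hlogc : Real.log c ≤ c - 1 := Real.log_le_sub_one_of_pos hc0
  have hnn2 : 0 ≤ α * Real.log (1/c) - (1 - c) := by
    rw [one_div, Real.log_inv]
    nlinarith [Real.log_nonpos hc0.le hc1]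
  have hfinal : (T-1)*c + (α * Real.log (1/c) - (1 - c)) ≤ α * Real.log T := by
    rcases le_total (α / T) 1 with h | h
    · have hceq : c = α / T := min_eq_left h
      rw [hceq, one_div, inv_div, Real.log_div hT0.ne' hα0.ne']
      have h4 := Real.log_le_sub_one_of_pos (show (0:ℝ) < 1/α by positivity)
      rw [one_div, Real.log_inv] at h4
      have e3 : α - 1 ≤ α * Real.log α := by nlinarith [mul_inv_cancel₀ hα0.ne']
      have e2 : (T-1)*(α/T) + (α * (Real.log T - Real.log α) - (1 - α/T))
          = α*Real.log T - (α*Real.log α - α + 1) := by field_simp; ring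
      rw [e2]
      linarith
    · have hceq : c = 1 := min_eq_right h
      rw [hceq]
      have hTα : T ≤ α := by rwa [le_div_iff₀ hT0, one_mul] at h
      have h4 := Real.log_le_sub_one_of_pos (show (0:ℝ) < 1/T by positivity)
      rw [one_div, Real.log_inv] at h4
      have hlT : 0 ≤ Real.log T := Real.log_nonneg hT
      have e5 : T - 1 ≤ T * Real.log T := by nlinarith [mul_inv_cancel₀ hT0.ne']
      have e6 : T * Real.log T ≤ α * Real.log T := mul_le_mul_of_nonneg_right hTα hlT
      simp only [div_one, Real.log_one]
      linarith
  calc _ ≤ ENNReal.ofReal ((T-1)*c) + ENNReal.ofReal (α * Real.log (1/c) - (1-c)) :=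
        add_le_add h1 h2
    _ = ENNReal.ofReal ((T-1)*c + (α * Real.log (1/c) - (1-c))) :=
        (ENNReal.ofReal_add (by nlinarith) hnn2).symm
    _ ≤ ENNReal.ofReal (α * Real.log T) := ENNReal.ofReal_le_ofReal hfinal

/-- A `φ`-smooth random variable: a real-valued random variable taking values in `[0,1]`,
absolutely continuous with density bounded above by `φ`. -/
def PhiSmooth {Ω : Type*} [MeasurableSpace Ω] (P : Measure Ω) (φ : ℝ) (X : Ω → ℝ) : Prop :=
  Measurable X ∧ ∃ f : ℝ → ENNReal,
    Measure.map X P = volume.withDensity f ∧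
    (∀ x, f x ≤ ENNReal.ofReal φ) ∧ ∀ x, x ∉ Set.Icc (0 : ℝ) 1 → f x = 0

/-- if `X_1, …, X_μ` are independent `φ`-smooth random variables on `[0,1]`,
then for all reals `α ≥ 1` and `β ≥ 0`,
`E[ min{ max_i α / X_i , μ^β } ] ≤ φ·α·(β+1)·μ·ln μ + 1`. -/
theorem smooth_min_max_ratio_expectation_bound
    {Ω : Type*} [MeasurableSpace Ω] (P : Measure Ω) [IsProbabilityMeasure P]
    (φ : ℝ) (hφ : 1 ≤ φ) (μ : ℕ) (hμ : 0 < μ)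
    (X : Fin μ → Ω → ℝ) (hsmooth : ∀ i, PhiSmooth P φ (X i))
    (hindep : iIndepFun X P)
    (α β : ℝ) (hα : 1 ≤ α) (hβ : 0 ≤ β) :
    ∫ ω, min ((Finset.univ.sup' ⟨⟨0, hμ⟩, Finset.mem_univ _⟩) fun i => α / X i ω)
        ((μ : ℝ) ^ β) ∂P
      ≤ φ * α * (β + 1) * μ * Real.log μ + 1 := by
  have hμ1 : (1:ℝ) ≤ (μ:ℝ) := by exact_mod_cast hμ
  have hμ0 : (0:ℝ) < (μ:ℝ) := by linarith
  set T : ℝ := (μ:ℝ) ^ β with hTdef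
  have hT1 : 1 ≤ T := Real.one_le_rpow hμ1 hβ
  have hlogT : Real.log T = β * Real.log μ := Real.log_rpow hμ0 β
  have hlogμ : 0 ≤ Real.log μ := Real.log_nonneg hμ1
  set g : ℝ → ℝ := fun t => max (min (α / t) T - 1) 0 with hgdef
  have hgmeas : Measurable g :=
    (((measurable_const.div measurable_id).min measurable_const).sub
      measurable_const).max measurable_const
  have hgnonneg : ∀ t, 0 ≤ g t := fun t => le_max_right _ _
  have hgle : ∀ t, g t ≤ T - 1 := fun t =>
    max_le (by have := min_le_right (α/t) T; linarith) (by linarith)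
  have hXmeas : ∀ i, Measurable (X i) := fun i => (hsmooth i).1
  have hne : (Finset.univ : Finset (Fin μ)).Nonempty := ⟨⟨0, hμ⟩, Finset.mem_univ _⟩
  -- a.e. support
  have hsupp : ∀ i, ∀ᵐ ω ∂P, X i ω ∈ Set.Icc (0:ℝ) 1 := by
    intro i
    obtain ⟨hXm, f, hmap, hfle, hf0⟩ := hsmooth i
    have hms : MeasurableSet ((Set.Icc (0:ℝ) 1)ᶜ) := measurableSet_Icc.compl
    have hP0 : P (X i ⁻¹' (Set.Icc (0:ℝ) 1)ᶜ) = 0 := by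
      have hm := Measure.map_apply (μ := P) hXm hms
      rw [hmap, withDensity_apply _ hms] at hm
      have hz : ∫⁻ x in (Set.Icc (0:ℝ) 1)ᶜ, f x ∂volume = 0 := by
        have hae : ∀ᵐ x ∂(volume.restrict ((Set.Icc (0:ℝ) 1)ᶜ)), f x = 0 :=
          (ae_restrict_iff' hms).mpr (ae_of_all _ fun x hx => hf0 x hx)
        rw [lintegral_congr_ae hae, lintegral_zero]
      rw [hm] at hz
      exact hz
    rw [ae_iff]
    exact hP0
  have hsuppall : ∀ᵐ ω ∂P, ∀ i, X i ω ∈ Set.Icc (0:ℝ) 1 := ae_all_iff.mpr hsupp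
  -- pointwise bound
  have hpw : ∀ ω, min (Finset.univ.sup' hne fun i => α / X i ω) T
      ≤ 1 + ∑ i, g (X i ω) := by
    intro ω
    obtain ⟨j, _, hj⟩ := Finset.exists_mem_eq_sup' hne (fun i => α / X i ω)
    rw [hj]
    have h1 : min (α / X j ω) T ≤ 1 + g (X j ω) := by
      have := le_max_left (min (α / X j ω) T - 1) (0:ℝ)
      simp only [hgdef]
      linarith
    have h2 : g (X j ω) ≤ ∑ i, g (X i ω) :=
      Finset.single_le_sum (fun i _ => hgnonneg (X i ω)) (Finset.mem_univ j)
    linarith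
  -- integrabilities
  have hgint : ∀ i, Integrable (fun ω => g (X i ω)) P := by
    intro i
    refine (integrable_const (T-1)).mono'
      ((hgmeas.comp (hXmeas i)).aestronglyMeasurable) (ae_of_all _ fun ω => ?_)
    rw [Real.norm_eq_abs, abs_of_nonneg (hgnonneg _)]
    exact hgle _
  have hRint : Integrable (fun ω => 1 + ∑ i, g (X i ω)) P :=
    (integrable_const 1).add (integrable_finset_sum _ fun i _ => hgint i)
  have hsupmeas : Measurable (fun ω => Finset.univ.sup' hne fun i => α / X i ω) := by
    have h := Finset.measurable_sup' hne (f := fun i (ω : Ω) => α / X i ω)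
      (fun i _ => measurable_const.div (hXmeas i))
    have he : (Finset.univ.sup' hne fun i (ω : Ω) => α / X i ω)
        = fun ω => Finset.univ.sup' hne fun i => α / X i ω := by
      ext ω; rw [Finset.sup'_apply]
    rwa [he] at h
  have hFmeas : Measurable (fun ω => min (Finset.univ.sup' hne fun i => α / X i ω) T) :=
    hsupmeas.min measurable_const
  have hFint : Integrable (fun ω => min (Finset.univ.sup' hne fun i => α / X i ω) T) P := by
    refine (integrable_const T).mono' hFmeas.aestronglyMeasurable ?_
    filter_upwards [hsuppall] with ω hω
    have hsup0 : (0:ℝ) ≤ Finset.univ.sup' hne fun i => α / X i ω := by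
      refine le_trans ?_ (Finset.le_sup' (fun i => α / X i ω) (Finset.mem_univ ⟨0, hμ⟩))
      have hx := hω ⟨0, hμ⟩
      exact div_nonneg (by linarith) hx.1
    rw [Real.norm_eq_abs, abs_le]
    constructor
    · have : (0:ℝ) ≤ min (Finset.univ.sup' hne fun i => α / X i ω) T :=
        le_min hsup0 (by linarith)
      linarith
    · exact min_le_right _ _
  -- per-coordinate expectation bound
  have hkey : ∀ i, ∫ ω, g (X i ω) ∂P ≤ φ * (α * Real.log T) := by
    intro i
    obtain ⟨hXm, f, hmap, hfle, hf0⟩ := hsmooth i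
    have h0 : ∫ ω, g (X i ω) ∂P = (∫⁻ ω, ENNReal.ofReal (g (X i ω)) ∂P).toReal := by
      rw [integral_eq_lintegral_of_nonneg_ae (ae_of_all _ fun ω => hgnonneg _)
        ((hgmeas.comp hXm).aestronglyMeasurable)]
    have h2 : Measure.map (X i) P
        ≤ volume.withDensity ((Set.Icc (0:ℝ) 1).indicator fun _ => ENNReal.ofReal φ) := by
      rw [hmap]
      refine withDensity_mono (ae_of_all _ fun x => ?_)
      by_cases hx : x ∈ Set.Icc (0:ℝ) 1
      · rw [Set.indicator_of_mem hx]; exact hfle x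
      · rw [Set.indicator_of_notMem hx, hf0 x hx]
    have h4 : ∫⁻ ω, ENNReal.ofReal (g (X i ω)) ∂P
        ≤ ENNReal.ofReal φ * ENNReal.ofReal (α * Real.log T) := by
      calc ∫⁻ ω, ENNReal.ofReal (g (X i ω)) ∂P
          = ∫⁻ x, ENNReal.ofReal (g x) ∂(Measure.map (X i) P) :=
            (lintegral_map hgmeas.ennreal_ofReal hXm).symm
        _ ≤ ∫⁻ x, ENNReal.ofReal (g x)
              ∂(volume.withDensity ((Set.Icc (0:ℝ) 1).indicator fun _ => ENNReal.ofReal φ)) :=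
            lintegral_mono' h2 le_rfl
        _ = ENNReal.ofReal φ * ∫⁻ x in Set.Icc (0:ℝ) 1, ENNReal.ofReal (g x) := by
            rw [withDensity_indicator measurableSet_Icc, withDensity_const,
              lintegral_smul_measure, smul_eq_mul]
        _ ≤ ENNReal.ofReal φ * ENNReal.ofReal (α * Real.log T) :=
            mul_le_mul_right (key_integral_bound hα hT1) _
    rw [h0]
    have h5 := ENNReal.toReal_mono
      (ENNReal.mul_ne_top ENNReal.ofReal_ne_top ENNReal.ofReal_ne_top) h4
    rwa [ENNReal.toReal_mul, ENNReal.toReal_ofReal (by linarith),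
      ENNReal.toReal_ofReal (by rw [hlogT]; positivity)] at h5
  -- put together
  have hmono := integral_mono_ae hFint hRint (ae_of_all _ hpw)
  rw [integral_add (integrable_const 1) (integrable_finset_sum _ fun i _ => hgint i),
    integral_const, integral_finset_sum _ (fun i _ => hgint i)] at hmono
  simp only [Measure.real, measure_univ, ENNReal.toReal_one, smul_eq_mul, mul_one] at hmono
  have hsum : ∑ i : Fin μ, ∫ ω, g (X i ω) ∂P ≤ (μ:ℝ) * (φ * (α * Real.log T)) := by
    calc ∑ i : Fin μ, ∫ ω, g (X i ω) ∂P ≤ ∑ _i : Fin μ, φ * (α * Real.log T) :=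
          Finset.sum_le_sum fun i _ => hkey i
      _ = (μ:ℝ) * (φ * (α * Real.log T)) := by
          rw [Finset.sum_const, Finset.card_univ, Fintype.card_fin, nsmul_eq_mul]
  rw [hlogT] at hsum
  have hlast : (μ:ℝ) * (φ * (α * (β * Real.log μ))) ≤ φ * α * (β + 1) * μ * Real.log μ := by
    nlinarith [mul_nonneg (mul_nonneg (by linarith : (0:ℝ) ≤ φ) (by linarith : (0:ℝ) ≤ α))
      (mul_nonneg hμ0.le hlogμ)]
  have hgoal : (∫ ω, min (Finset.univ.sup' hne fun i => α / X i ω) T ∂P)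
      ≤ φ * α * (β + 1) * μ * Real.log μ + 1 := by linarith
  exact hgoal
end

section
/- Let Y_1, ..., Y_μ be independent random variables, each uniformly distributed on [0, 1/φ] for some φ ≥ 1, and let Z = 1/min_{i∈[μ]} Y_i. Then for any reals α ≥ 1 and β ≥ 0, E[ min{ α·Z , μ^β } ] ≤ φ·α·(β+1)·μ·ln(μ) + 1. -/
/-!
A union bound controls the tail of `g = min (α Z) (μ ^ β)`: `t ≤ α Z` forces some
`Y i ≤ α / t`, an event of probability at most `φ α / t`, so `P (t ≤ g) ≤ min 1 (φ α μ / t)`.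
Since `g ≤ μ ^ β`, the layer cake formula gives
`E g = ∫₀^{μ^β} P (t ≤ g) dt ≤ 1 + φ α μ log (μ ^ β) = 1 + φ α β μ log μ`.
-/

open MeasureTheory ProbabilityTheory

/-- `Y` is uniformly distributed on the interval `[a, b]` under the probability measure `P`. -/
def UniformIcc {Ω : Type*} [MeasurableSpace Ω] (P : Measure Ω) (a b : ℝ) (Y : Ω → ℝ) : Prop :=
  Measurable Y ∧
    Measure.map Y P = (ENNReal.ofReal (b - a))⁻¹ • volume.restrict (Set.Icc a b)

open Set

namespace UniformIcc

variable {Ω : Type*} [MeasurableSpace Ω] {P : Measure Ω} {a b : ℝ} {Y : Ω → ℝ}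

lemma measure_preimage (hY : UniformIcc P a b Y) {s : Set ℝ} (hs : MeasurableSet s) :
    P (Y ⁻¹' s) = (ENNReal.ofReal (b - a))⁻¹ * volume (s ∩ Icc a b) := by
  rw [← Measure.map_apply hY.1 hs, hY.2, Measure.smul_apply, Measure.restrict_apply hs,
    smul_eq_mul]

lemma measure_le_le (hY : UniformIcc P a b Y) (hab : a < b) (t : ℝ) :
    P {ω | Y ω ≤ t} ≤ ENNReal.ofReal ((t - a) / (b - a)) := by
  calc P {ω | Y ω ≤ t} = (ENNReal.ofReal (b - a))⁻¹ * volume (Iic t ∩ Icc a b) :=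
        hY.measure_preimage measurableSet_Iic
    _ ≤ (ENNReal.ofReal (b - a))⁻¹ * volume (Icc a t) := by
        gcongr
        exact fun x hx => ⟨hx.2.1, hx.1⟩
    _ = ENNReal.ofReal ((t - a) / (b - a)) := by
        rw [Real.volume_Icc, ENNReal.ofReal_div_of_pos (sub_pos.mpr hab), div_eq_mul_inv,
          mul_comm]

lemma ae_lt (hY : UniformIcc P a b Y) (hab : a < b) : ∀ᵐ ω ∂P, a < Y ω := by
  simp only [ae_iff, not_lt]
  simpa using hY.measure_le_le hab a

end UniformIcc

section iInf

variable {Ω ι : Type*} [MeasurableSpace Ω] [Fintype ι] [Nonempty ι] {P : Measure Ω}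
  {Y : ι → Ω → ℝ}

lemma measure_iInf_le_le_sum (s : ℝ) :
    P {ω | ⨅ i, Y i ω ≤ s} ≤ ∑ i, P {ω | Y i ω ≤ s} := by
  refine (measure_mono fun ω hω => ?_).trans (measure_iUnion_fintype_le P _)
  obtain ⟨i, hi⟩ := exists_eq_ciInf_of_finite (f := fun i => Y i ω)
  exact mem_iUnion.mpr ⟨i, hi.trans_le hω⟩

lemma ae_lt_iInf {c : ℝ} (hY : ∀ i, ∀ᵐ ω ∂P, c < Y i ω) : ∀ᵐ ω ∂P, c < ⨅ i, Y i ω := by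
  filter_upwards [ae_all_iff.mpr hY] with ω hω
  obtain ⟨i, hi⟩ := exists_eq_ciInf_of_finite (f := fun i => Y i ω)
  exact hi ▸ hω i

lemma UniformIcc.measure_iInf_le_le {a b : ℝ} (hY : ∀ i, UniformIcc P a b (Y i)) (hab : a < b)
    (s : ℝ) :
    P {ω | ⨅ i, Y i ω ≤ s} ≤ Fintype.card ι * ENNReal.ofReal ((s - a) / (b - a)) := by
  refine (measure_iInf_le_le_sum s).trans ?_
  calc ∑ i, P {ω | Y i ω ≤ s} ≤ ∑ _i : ι, ENNReal.ofReal ((s - a) / (b - a)) :=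
        Finset.sum_le_sum fun i _ => (hY i).measure_le_le hab s
    _ = Fintype.card ι * ENNReal.ofReal ((s - a) / (b - a)) := by
        rw [Finset.sum_const, Finset.card_univ, nsmul_eq_mul]

lemma UniformIcc.measureReal_le_mul_inv_iInf {b α t : ℝ} (hY : ∀ i, UniformIcc P 0 b (Y i))
    (hb : 0 < b) (hα : 0 ≤ α) (ht : 0 < t) :
    P.real {ω | t ≤ α * (⨅ i, Y i ω)⁻¹} ≤ Fintype.card ι * α / (b * t) := by
  have hsub : {ω | t ≤ α * (⨅ i, Y i ω)⁻¹} ≤ᵐ[P] {ω | ⨅ i, Y i ω ≤ α / t} := by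
    filter_upwards [ae_lt_iInf fun i => (hY i).ae_lt hb] with ω hω hle
    change ⨅ i, Y i ω ≤ α / t
    rwa [le_div_comm₀ hω ht, div_eq_mul_inv]
  refine ENNReal.toReal_le_of_le_ofReal (by positivity) ((measure_mono_ae hsub).trans ?_)
  refine (UniformIcc.measure_iInf_le_le hY hb _).trans_eq ?_
  rw [← ENNReal.ofReal_natCast, ← ENNReal.ofReal_mul (Nat.cast_nonneg _), sub_zero, sub_zero,
    div_div, mul_comm t b, mul_div_assoc]

end iInf

theorem integral_le_one_add_mul_log_of_measureReal_le_div {α : Type*} [MeasurableSpace α]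
    {μ : Measure α} [IsProbabilityMeasure μ] {f : α → ℝ} {M c : ℝ}
    (hf : AEStronglyMeasurable f μ) (f_nn : 0 ≤ᵐ[μ] f) (f_bdd : f ≤ᵐ[μ] fun _ => M) (hM : 1 ≤ M)
    (htail : ∀ t, 0 < t → μ.real {a | t ≤ f a} ≤ c / t) :
    ∫ a, f a ∂μ ≤ 1 + c * Real.log M := by
  set F : ℝ → ℝ := fun t => μ.real {a | t ≤ f a}
  have hF_anti : Antitone F := fun s t hst => measureReal_mono fun a ha => hst.trans ha
  have hf_int : Integrable f μ := by
    refine Integrable.of_bound hf M ?_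
    filter_upwards [f_nn, f_bdd] with a h0 hfM
    rwa [Real.norm_eq_abs, abs_of_nonneg h0]
  have h01 : ∫ t in (0 : ℝ)..1, F t ≤ 1 := by
    calc ∫ t in (0 : ℝ)..1, F t ≤ ∫ t in (0 : ℝ)..1, (1 : ℝ) :=
          intervalIntegral.integral_mono_on zero_le_one hF_anti.intervalIntegrable
            intervalIntegrable_const fun t _ => measureReal_le_one
      _ = 1 := by simp
  have h1M : ∫ t in (1 : ℝ)..M, F t ≤ c * Real.log M := by
    have hinv : IntervalIntegrable (fun t : ℝ => t⁻¹) volume 1 M := by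
      refine intervalIntegral.intervalIntegrable_inv (fun t ht => ?_) continuousOn_id
      rw [uIcc_of_le hM] at ht
      exact (zero_lt_one.trans_le ht.1).ne'
    calc ∫ t in (1 : ℝ)..M, F t ≤ ∫ t in (1 : ℝ)..M, c * t⁻¹ :=
          intervalIntegral.integral_mono_on hM hF_anti.intervalIntegrable (hinv.const_mul c)
            fun t ht => (htail t (zero_lt_one.trans_le ht.1)).trans_eq (div_eq_mul_inv c t)
      _ = c * Real.log M := by
          rw [intervalIntegral.integral_const_mul, integral_inv_of_pos zero_lt_one
            (zero_lt_one.trans_le hM), div_one]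
  calc ∫ a, f a ∂μ = ∫ t in (0 : ℝ)..M, F t := by
        rw [hf_int.integral_eq_integral_Ioc_meas_le f_nn f_bdd,
          intervalIntegral.integral_of_le (zero_le_one.trans hM)]
    _ = (∫ t in (0 : ℝ)..1, F t) + ∫ t in (1 : ℝ)..M, F t :=
        (intervalIntegral.integral_add_adjacent_intervals hF_anti.intervalIntegrable
          hF_anti.intervalIntegrable).symm
    _ ≤ 1 + c * Real.log M := add_le_add h01 h1M

theorem uniform_min_reciprocal_expectation_bound_general
    {Ω : Type*} [MeasurableSpace Ω] (P : Measure Ω) [IsProbabilityMeasure P]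
    (φ : ℝ) (hφ : 1 ≤ φ) (μ : ℕ) (hμ : 0 < μ)
    (Y : Fin μ → Ω → ℝ) (hunif : ∀ i, UniformIcc P 0 (1 / φ) (Y i))
    (Z : Ω → ℝ) (hZ : ∀ ω, Z ω = (⨅ i, Y i ω)⁻¹)
    (α β : ℝ) (hα : 1 ≤ α) (hβ : 0 ≤ β) :
    ∫ ω, min (α * Z ω) ((μ : ℝ) ^ β) ∂P ≤ φ * α * (β + 1) * μ * Real.log μ + 1 := by
  have : Nonempty (Fin μ) := Fin.pos_iff_nonempty.mp hμ
  have hb : (0 : ℝ) < 1 / φ := by positivity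
  have hμ1 : (1 : ℝ) ≤ μ := by exact_mod_cast hμ
  have hZ_meas : Measurable Z := by
    rw [funext hZ]
    exact (Measurable.iInf fun i => (hunif i).1).inv
  have hZ_nn : 0 ≤ᵐ[P] Z := by
    filter_upwards [ae_lt_iInf fun i => (hunif i).ae_lt hb] with ω hω
    exact (hZ ω).symm ▸ (inv_pos.mpr hω).le
  have htail (t : ℝ) (ht : 0 < t) :
      P.real {ω | t ≤ min (α * Z ω) ((μ : ℝ) ^ β)} ≤ φ * α * μ / t := by
    calc P.real {ω | t ≤ min (α * Z ω) ((μ : ℝ) ^ β)} ≤ P.real {ω | t ≤ α * Z ω} :=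
          measureReal_mono fun ω (hω : t ≤ min _ _) => hω.trans (min_le_left _ _)
      _ ≤ μ * α / (1 / φ * t) := by
          simpa only [hZ, Fintype.card_fin] using
            UniformIcc.measureReal_le_mul_inv_iInf hunif hb (zero_le_one.trans hα) ht
      _ = φ * α * μ / t := by field_simp
  calc ∫ ω, min (α * Z ω) ((μ : ℝ) ^ β) ∂P ≤ 1 + φ * α * μ * Real.log ((μ : ℝ) ^ β) := by
        refine integral_le_one_add_mul_log_of_measureReal_le_div
          ((measurable_const.mul hZ_meas).min measurable_const).aestronglyMeasurable ?_
          (ae_of_all _ fun ω => min_le_right _ _) (Real.one_le_rpow hμ1 hβ) htail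
        filter_upwards [hZ_nn] with ω hω
        exact le_min (mul_nonneg (zero_le_one.trans hα) hω) (by positivity)
    _ ≤ φ * α * (β + 1) * μ * Real.log μ + 1 := by
        have : 0 ≤ φ * α * μ * Real.log μ := mul_nonneg (by positivity) (Real.log_nonneg hμ1)
        rw [Real.log_rpow (zero_lt_one.trans_le hμ1)]
        linarith

/-- if `Y_1, …, Y_μ` are independent uniform random variables on `[0, 1/φ]`
(`φ ≥ 1`) and `Z = 1 / min_i Y_i`, then for all reals `α ≥ 1` and `β ≥ 0`,
`E[ min{ α·Z , μ^β } ] ≤ φ·α·(β+1)·μ·ln μ + 1`. -/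
theorem uniform_min_reciprocal_expectation_bound
    {Ω : Type*} [MeasurableSpace Ω] (P : Measure Ω) [IsProbabilityMeasure P]
    (φ : ℝ) (hφ : 1 ≤ φ) (μ : ℕ) (hμ : 0 < μ)
    (Y : Fin μ → Ω → ℝ) (hunif : ∀ i, UniformIcc P 0 (1 / φ) (Y i))
    (hindep : iIndepFun Y P)
    (Z : Ω → ℝ) (hZ : ∀ ω, Z ω = (⨅ i, Y i ω)⁻¹)
    (α β : ℝ) (hα : 1 ≤ α) (hβ : 0 ≤ β) :
    ∫ ω, min (α * Z ω) ((μ : ℝ) ^ β) ∂P ≤ φ * α * (β + 1) * μ * Real.log μ + 1 :=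
  uniform_min_reciprocal_expectation_bound_general P φ hφ μ hμ Y hunif Z hZ α β hα hβ
end

section
/- In any congestion game, for any strategy profile s, any player i, and any strategy s_i' ∈ S_i, Rosenthal's potential satisfies Φ(s) − Φ(s_i', s_{−i}) = C_i(s) − C_i(s_i', s_{−i}). -/
/-- The load of resource `r` under strategy profile `s`: the number of players using `r`. -/
def load {n m : ℕ} (s : Fin n → Finset (Fin m)) (r : Fin m) : ℕ :=
  (Finset.univ.filter fun i => r ∈ s i).card

/-- The cost of player `i` under profile `s`, with resource costs `cost r ℓ`. -/
def playerCost {n m : ℕ} (cost : Fin m → ℕ → ℝ) (s : Fin n → Finset (Fin m)) (i : Fin n) : ℝ :=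
  ∑ r ∈ s i, cost r (load s r)

/-- Rosenthal's potential `Φ(s) = Σ_{r ∈ R} Σ_{j=1}^{ℓ_r(s)} c_r(j)`. -/
def potential {n m : ℕ} (cost : Fin m → ℕ → ℝ) (s : Fin n → Finset (Fin m)) : ℝ :=
  ∑ r : Fin m, ∑ j ∈ Finset.Icc 1 (load s r), cost r j

/-- A strategy profile is valid when each player plays a strategy from their strategy set. -/
def ValidProfile {n m : ℕ} (strat : Fin n → Set (Finset (Fin m)))
    (s : Fin n → Finset (Fin m)) : Prop :=
  ∀ i, s i ∈ strat i

/-- An `(1+ε)`-improving move from `s` to `s'`: some player `i` deviates to a strategy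
`si' ∈ S_i` with `(1+ε)·C_i(s') < C_i(s)`. -/
def ImprovingMove {n m : ℕ} (strat : Fin n → Set (Finset (Fin m))) (cost : Fin m → ℕ → ℝ)
    (ε : ℝ) (s s' : Fin n → Finset (Fin m)) : Prop :=
  ∃ i : Fin n, ∃ si' ∈ strat i, s' = Function.update s i si' ∧
    (1 + ε) * playerCost cost s' i < playerCost cost s i


lemma load_sum {n m : ℕ} (s : Fin n → Finset (Fin m)) (r : Fin m) :
    load s r = ∑ j : Fin n, if r ∈ s j then 1 else 0 := by
  rw [load, Finset.card_filter]

lemma load_update_key {n m : ℕ} (s : Fin n → Finset (Fin m)) (i : Fin n)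
    (si' : Finset (Fin m)) (r : Fin m) :
    load (Function.update s i si') r + (if r ∈ s i then 1 else 0)
      = load s r + (if r ∈ si' then 1 else 0) := by
  rw [load_sum, load_sum]
  have h1 : (∑ j : Fin n, if r ∈ Function.update s i si' j then 1 else 0)
      = (if r ∈ si' then 1 else 0) + ∑ j ∈ Finset.univ.erase i, (if r ∈ s j then 1 else 0) := by
    rw [← Finset.add_sum_erase _ _ (Finset.mem_univ i)]
    congr 1
    · simp
    · exact Finset.sum_congr rfl fun j hj => by
        rw [Function.update_of_ne (Finset.mem_erase.1 hj).1]
  have h2 : (∑ j : Fin n, if r ∈ s j then 1 else 0)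
      = (if r ∈ s i then 1 else 0) + ∑ j ∈ Finset.univ.erase i, (if r ∈ s j then 1 else 0) := by
    rw [← Finset.add_sum_erase _ _ (Finset.mem_univ i)]
  rw [h1, h2]; ring

lemma per_resource {n m : ℕ} (cost : Fin m → ℕ → ℝ) (s : Fin n → Finset (Fin m))
    (i : Fin n) (si' : Finset (Fin m)) (r : Fin m) :
    (∑ j ∈ Finset.Icc 1 (load s r), cost r j)
      - (∑ j ∈ Finset.Icc 1 (load (Function.update s i si') r), cost r j)
    = (if r ∈ s i then cost r (load s r) else 0)
      - (if r ∈ si' then cost r (load (Function.update s i si') r) else 0) := by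
  have key := load_update_key s i si' r
  set ℓ := load s r
  set ℓ' := load (Function.update s i si') r
  by_cases h1 : r ∈ s i <;> by_cases h2 : r ∈ si' <;> simp [h1, h2] at key ⊢
  · rw [key]; ring
  · rw [← key, Finset.sum_Icc_succ_top (Nat.le_add_left 1 ℓ')]; ring
  · rw [key, Finset.sum_Icc_succ_top (Nat.le_add_left 1 ℓ)]; ring
  · rw [key, sub_self]

/-- Rosenthal's potential satisfies
`Φ(s) − Φ(s_i', s_{−i}) = C_i(s) − C_i(s_i', s_{−i})` for every profile `s`, player `i`
and deviation `s_i' ∈ S_i`. -/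
theorem potential_diff_eq_cost_diff {n m : ℕ}
    (strat : Fin n → Set (Finset (Fin m)))
    (hstrat : ∀ i, ∀ t ∈ strat i, t.Nonempty)
    (cost : Fin m → ℕ → ℝ)
    (s : Fin n → Finset (Fin m)) (hs : ValidProfile strat s)
    (i : Fin n) (si' : Finset (Fin m)) (hsi' : si' ∈ strat i) :
    potential cost s - potential cost (Function.update s i si')
      = playerCost cost s i - playerCost cost (Function.update s i si') i := by
  have hL : potential cost s - potential cost (Function.update s i si')
      = ∑ r : Fin m, ((∑ j ∈ Finset.Icc 1 (load s r), cost r j)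
          - (∑ j ∈ Finset.Icc 1 (load (Function.update s i si') r), cost r j)) := by
    rw [potential, potential, ← Finset.sum_sub_distrib]
  rw [hL]
  rw [Finset.sum_congr rfl fun r _ => per_resource cost s i si' r,
    Finset.sum_sub_distrib]
  congr 1
  · rw [playerCost, Finset.sum_ite_mem, Finset.univ_inter]
  · rw [playerCost, Function.update_self, Finset.sum_ite_mem, Finset.univ_inter]
end

section
/- Consider a φ-smooth congestion game with n players and m ≥ 2 resources, where the n·m resource cost values {c_r(j)}_{r ∈ R, j ∈ {1,...,n}} are independent φ-smooth random variables. Fix ε > 0, and let T be the supremum, over all starting profiles and all sequences of consecutive (1+ε)-improving moves, of the length of the sequence. Then E[T] ≤ φ·(1 + 1/ε)·m·n·(m+1)·m·n·ln(m·n) + 1; in particular, (1+ε)-better-response dynamics reach a (1+ε)-approximate pure Nash equilibrium after an expected number of steps that is polynomial in 1/ε, φ, n, and m. -/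
open MeasureTheory ProbabilityTheory
open scoped ENNReal NNReal

/-- The supremum, over all starting profiles and all sequences of consecutive
`(1+ε)`-improving moves, of the length of the sequence. -/
noncomputable def maxImprovingSeqLen {n m : ℕ} (strat : Fin n → Set (Finset (Fin m)))
    (cost : Fin m → ℕ → ℝ) (ε : ℝ) : ℕ :=
  sSup {T : ℕ | ∃ s : ℕ → Fin n → Finset (Fin m),
    (∀ k ≤ T, ValidProfile strat (s k)) ∧
    ∀ k < T, ImprovingMove strat cost ε (s k) (s (k + 1))}

/-- Turn a family of values indexed by `Fin m × Fin n` (resource `r`, load `j+1`) into a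
cost function `Fin m → ℕ → ℝ` defined on loads `1, …, n`. -/
def costOf {n m : ℕ} (c : Fin m × Fin n → ℝ) : Fin m → ℕ → ℝ :=
  fun r j => if h : 1 ≤ j ∧ j ≤ n then c (r, ⟨j - 1, by omega⟩) else 0

section Aux
variable {n m : ℕ}

lemma load_le (s : Fin n → Finset (Fin m)) (r : Fin m) : load s r ≤ n := by
  classical
  simpa [load] using (Finset.card_filter_le (Finset.univ : Finset (Fin n)) fun i => r ∈ s i)

lemma one_le_load {s : Fin n → Finset (Fin m)} {i : Fin n} {r : Fin m} (h : r ∈ s i) :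
    1 ≤ load s r := by
  classical
  exact Finset.card_pos.mpr ⟨i, by simp [h]⟩

lemma load_update (s : Fin n → Finset (Fin m)) (i : Fin n) (si' : Finset (Fin m)) (r : Fin m) :
    load (Function.update s i si') r + (if r ∈ s i then 1 else 0)
      = load s r + (if r ∈ si' then 1 else 0) := by
  classical
  have hcard : ∀ f : Fin n → Finset (Fin m),
      load f r = ∑ k : Fin n, if r ∈ f k then 1 else 0 := by
    intro f; rw [load, Finset.card_filter]
  rw [hcard, hcard]
  have h1 : ∀ k : Fin n, (if r ∈ Function.update s i si' k then (1:ℕ) else 0)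
      = Function.update (fun k => if r ∈ s k then (1:ℕ) else 0) i (if r ∈ si' then 1 else 0) k := by
    intro k
    by_cases hk : k = i
    · subst hk; simp
    · simp [Function.update_of_ne hk]
  rw [Finset.sum_congr rfl fun k _ => h1 k]
  rw [Finset.sum_update_of_mem (Finset.mem_univ i)]
  rw [Finset.sum_eq_sum_sdiff_singleton_add (Finset.mem_univ i)
    (fun k => if r ∈ s k then (1:ℕ) else 0)]
  omega

lemma rosenthal (cost : Fin m → ℕ → ℝ) (s : Fin n → Finset (Fin m)) (i : Fin n)
    (si' : Finset (Fin m)) :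
    potential cost (Function.update s i si') + playerCost cost s i
      = potential cost s + playerCost cost (Function.update s i si') i := by
  classical
  set s' := Function.update s i si' with hs'
  have hsi : s' i = si' := by simp [hs']
  have hpc : ∀ (u : Fin n → Finset (Fin m)),
      playerCost cost u i = ∑ r : Fin m, if r ∈ u i then cost r (load u r) else 0 := by
    intro u
    rw [playerCost, Finset.sum_ite_mem]
    simp [Finset.univ_inter]
  rw [hpc, hpc, potential, potential, ← Finset.sum_add_distrib, ← Finset.sum_add_distrib]
  apply Finset.sum_congr rfl
  intro r _
  have hlu := load_update s i si' r
  rw [← hs'] at hlu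
  rw [hsi]
  by_cases h1 : r ∈ s i <;> by_cases h2 : r ∈ si' <;> simp [h1, h2] at hlu ⊢
  · have : load s' r = load s r := by omega
    rw [this]
  · -- r ∈ s i, r ∉ si' : load s r = load s' r + 1
    have hl : load s r = load s' r + 1 := by omega
    rw [hl, Finset.sum_Icc_succ_top (by omega : 1 ≤ load s' r + 1)]
  · -- r ∉ s i, r ∈ si' : load s' r = load s r + 1
    have hl : load s' r = load s r + 1 := by omega
    rw [hl, Finset.sum_Icc_succ_top (by omega : 1 ≤ load s r + 1)]
  · have : load s' r = load s r := by omega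
    rw [this]

end Aux


section Det
variable {n m : ℕ} {strat : Fin n → Set (Finset (Fin m))} {cost : Fin m → ℕ → ℝ} {ε Δ : ℝ}

lemma playerCost_nonneg (hc0 : ∀ r j, 0 ≤ cost r j) (s : Fin n → Finset (Fin m)) (i : Fin n) :
    0 ≤ playerCost cost s i :=
  Finset.sum_nonneg fun r _ => hc0 r _

lemma step_decrease (hstrat' : ∀ i, ∀ t ∈ strat i, t.Nonempty)
    (hc0 : ∀ r j, 0 ≤ cost r j) (hε : 0 < ε) (hΔ0 : 0 ≤ Δ)
    (hΔ : ∀ r j, 1 ≤ j → j ≤ n → Δ ≤ cost r j)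
    {s s' : Fin n → Finset (Fin m)} (h : ImprovingMove strat cost ε s s') :
    potential cost s' + ε * Δ ≤ potential cost s ∧ potential cost s' < potential cost s := by
  obtain ⟨i, si', hmem, rfl, hlt⟩ := h
  set s' := Function.update s i si' with hs'
  have hros := rosenthal cost s i si'
  have hC'0 : 0 ≤ playerCost cost s' i := playerCost_nonneg hc0 s' i
  obtain ⟨r₀, hr₀⟩ := hstrat' i si' hmem
  have hr₀' : r₀ ∈ s' i := by simp [hs', hr₀]
  have hload1 : 1 ≤ load s' r₀ := one_le_load hr₀'
  have hloadn : load s' r₀ ≤ n := load_le s' r₀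
  have hC'Δ : Δ ≤ playerCost cost s' i := by
    refine le_trans (hΔ r₀ (load s' r₀) hload1 hloadn) ?_
    exact Finset.single_le_sum (fun r _ => hc0 r _) hr₀'
  constructor
  · nlinarith [hlt, hC'Δ, hε.le]
  · nlinarith [hlt, hC'0, hε.le]

lemma potential_nonneg (hc0 : ∀ r j, 0 ≤ cost r j) (s : Fin n → Finset (Fin m)) :
    0 ≤ potential cost s :=
  Finset.sum_nonneg fun r _ => Finset.sum_nonneg fun j _ => hc0 r j

lemma potential_le (hc1 : ∀ r j, cost r j ≤ 1) (s : Fin n → Finset (Fin m)) :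
    potential cost s ≤ (m : ℝ) * n := by
  have h1 : ∀ r : Fin m, ∑ j ∈ Finset.Icc 1 (load s r), cost r j ≤ (n : ℝ) := by
    intro r
    calc ∑ j ∈ Finset.Icc 1 (load s r), cost r j
        ≤ ∑ j ∈ Finset.Icc 1 (load s r), (1:ℝ) :=
          Finset.sum_le_sum fun j _ => hc1 r j
      _ = (load s r : ℝ) := by simp [Nat.card_Icc]
      _ ≤ (n : ℝ) := by exact_mod_cast load_le s r
  calc potential cost s ≤ ∑ _r : Fin m, (n:ℝ) := Finset.sum_le_sum fun r _ => h1 r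
    _ = (m:ℝ) * n := by simp [mul_comm]

lemma chain_decrease (hstrat' : ∀ i, ∀ t ∈ strat i, t.Nonempty)
    (hc0 : ∀ r j, 0 ≤ cost r j) (hε : 0 < ε) (hΔ0 : 0 ≤ Δ)
    (hΔ : ∀ r j, 1 ≤ j → j ≤ n → Δ ≤ cost r j)
    {s : ℕ → Fin n → Finset (Fin m)} {t : ℕ}
    (himp : ∀ k < t, ImprovingMove strat cost ε (s k) (s (k + 1))) :
    potential cost (s t) + t * (ε * Δ) ≤ potential cost (s 0) := by
  induction t with
  | zero => simp
  | succ t ih =>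
    have h1 := (step_decrease hstrat' hc0 hε hΔ0 hΔ (himp t (by omega))).1
    have h2 := ih fun k hk => himp k (by omega)
    push_cast
    nlinarith [h1, h2]

lemma chain_strict (hstrat' : ∀ i, ∀ t ∈ strat i, t.Nonempty)
    (hc0 : ∀ r j, 0 ≤ cost r j) (hε : 0 < ε) (hΔ0 : 0 ≤ Δ)
    (hΔ : ∀ r j, 1 ≤ j → j ≤ n → Δ ≤ cost r j)
    {s : ℕ → Fin n → Finset (Fin m)} {t : ℕ}
    (himp : ∀ k < t, ImprovingMove strat cost ε (s k) (s (k + 1))) :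
    ∀ j k, j < k → k ≤ t → potential cost (s k) < potential cost (s j) := by
  intro j k hjk hkt
  induction k with
  | zero => omega
  | succ k ih =>
    have hstep := (step_decrease hstrat' hc0 hε hΔ0 hΔ (himp k (by omega))).2
    rcases Nat.lt_or_ge j k with h | h
    · exact lt_trans hstep (ih h (by omega))
    · have : j = k := by omega
      subst this; exact hstep

lemma card_bound (hstrat' : ∀ i, ∀ t ∈ strat i, t.Nonempty)
    (hc0 : ∀ r j, 0 ≤ cost r j) (hε : 0 < ε) (hΔ0 : 0 ≤ Δ)
    (hΔ : ∀ r j, 1 ≤ j → j ≤ n → Δ ≤ cost r j)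
    {s : ℕ → Fin n → Finset (Fin m)} {t : ℕ}
    (himp : ∀ k < t, ImprovingMove strat cost ε (s k) (s (k + 1))) :
    t + 1 ≤ (n + 1) ^ m := by
  classical
  have hinj : Function.Injective (fun k : Fin (t + 1) => fun r : Fin m =>
      (⟨load (s k) r, Nat.lt_succ_of_le (load_le _ _)⟩ : Fin (n + 1))) := by
    intro k k' hkk'
    by_contra hne
    have hload : ∀ r, load (s k) r = load (s k') r := by
      intro r
      have h := congrFun hkk' r
      simpa [Fin.mk.injEq] using h
    have hpot : potential cost (s k) = potential cost (s k') := by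
      unfold potential
      exact Finset.sum_congr rfl fun r _ => by rw [hload r]
    rcases Nat.lt_or_ge (k : ℕ) (k' : ℕ) with h | h
    · have := chain_strict hstrat' hc0 hε hΔ0 hΔ himp k k' h (by omega)
      linarith
    · have hlt : (k' : ℕ) < (k : ℕ) := by
        rcases Nat.lt_or_ge (k' : ℕ) (k : ℕ) with h' | h'
        · exact h'
        · exact absurd (Fin.ext (by omega)) hne
      have := chain_strict hstrat' hc0 hε hΔ0 hΔ himp k' k hlt (by omega)
      linarith
  have := Fintype.card_le_of_injective _ hinj
  simpa using this

lemma main_det (hstrat' : ∀ i, ∀ t ∈ strat i, t.Nonempty)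
    (hc0 : ∀ r j, 0 ≤ cost r j) (hc1 : ∀ r j, cost r j ≤ 1) (hε : 0 < ε) (hΔ0 : 0 ≤ Δ)
    (hΔ : ∀ r j, 1 ≤ j → j ≤ n → Δ ≤ cost r j) :
    maxImprovingSeqLen strat cost ε ≤ (n + 1) ^ m - 1
    ∧ (maxImprovingSeqLen strat cost ε : ℝ) * (ε * Δ) ≤ (m : ℝ) * n := by
  set S := {T : ℕ | ∃ s : ℕ → Fin n → Finset (Fin m),
    (∀ k ≤ T, ValidProfile strat (s k)) ∧
    ∀ k < T, ImprovingMove strat cost ε (s k) (s (k + 1))} with hS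
  have hbd : ∀ a ∈ S, a ≤ (n + 1) ^ m - 1 := by
    rintro a ⟨s, _, himp⟩
    have := card_bound hstrat' hc0 hε hΔ0 hΔ himp
    omega
  have hsup1 : maxImprovingSeqLen strat cost ε ≤ (n + 1) ^ m - 1 := csSup_le' hbd
  refine ⟨hsup1, ?_⟩
  rcases Set.eq_empty_or_nonempty S with hemp | hne
  · have : maxImprovingSeqLen strat cost ε = 0 := by
      rw [maxImprovingSeqLen, ← hS, hemp]; exact csSup_empty
    rw [this]
    push_cast
    rw [zero_mul]
    positivity
  · have hmem : maxImprovingSeqLen strat cost ε ∈ S :=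
      Nat.sSup_mem hne ⟨(n + 1) ^ m - 1, hbd⟩
    obtain ⟨s, _, himp⟩ := hmem
    have h1 := chain_decrease hstrat' hc0 hε hΔ0 hΔ himp
    have h2 := potential_nonneg hc0 (s (maxImprovingSeqLen strat cost ε))
    have h3 := potential_le hc1 (s 0)
    linarith

end Det


section Prob
variable {Ω : Type*} [MeasurableSpace Ω] {P : Measure Ω} {φ : ℝ} {X : Ω → ℝ}

lemma phiSmooth_tail (h : PhiSmooth P φ X) (hφ0 : 0 ≤ φ) {x : ℝ} (hx : 0 ≤ x) :
    P {ω | X ω ≤ x} ≤ ENNReal.ofReal (φ * x) := by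
  obtain ⟨hX, f, hmap, hfφ, hf0⟩ := h
  have h1 : P {ω | X ω ≤ x} = Measure.map X P (Set.Iic x) := by
    rw [Measure.map_apply hX measurableSet_Iic]; rfl
  rw [h1, hmap, withDensity_apply _ measurableSet_Iic]
  calc ∫⁻ y in Set.Iic x, f y
      ≤ ∫⁻ y in Set.Iic x, (Set.Icc 0 x).indicator (fun _ => ENNReal.ofReal φ) y := by
        refine setLIntegral_mono (measurable_const.indicator measurableSet_Icc) ?_
        intro y hy
        by_cases hy01 : y ∈ Set.Icc (0:ℝ) 1
        · have : y ∈ Set.Icc (0:ℝ) x := ⟨hy01.1, hy⟩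
          rw [Set.indicator_of_mem this]
          exact hfφ y
        · rw [hf0 y hy01]
          exact zero_le
    _ ≤ ∫⁻ y, (Set.Icc 0 x).indicator (fun _ => ENNReal.ofReal φ) y :=
        setLIntegral_le_lintegral _ _
    _ = ENNReal.ofReal φ * volume (Set.Icc (0:ℝ) x) := by
        rw [lintegral_indicator measurableSet_Icc, setLIntegral_const]
    _ ≤ ENNReal.ofReal (φ * x) := by
        rw [Real.volume_Icc, ENNReal.ofReal_mul hφ0]
        gcongr
        simp [hx]

lemma phiSmooth_unit (h : PhiSmooth P φ X) : ∀ᵐ ω ∂P, X ω ∈ Set.Icc (0:ℝ) 1 := by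
  obtain ⟨hX, f, hmap, hfφ, hf0⟩ := h
  rw [MeasureTheory.ae_iff]
  have hset : {ω | ¬ X ω ∈ Set.Icc (0:ℝ) 1} = X ⁻¹' (Set.Icc (0:ℝ) 1)ᶜ := rfl
  rw [hset, ← Measure.map_apply hX measurableSet_Icc.compl, hmap,
    withDensity_apply _ measurableSet_Icc.compl]
  have : ∫⁻ y in (Set.Icc (0:ℝ) 1)ᶜ, f y ≤ ∫⁻ y in (Set.Icc (0:ℝ) 1)ᶜ, 0 := by
    refine setLIntegral_mono measurable_const ?_
    intro y hy
    rw [hf0 y hy]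
  simpa using this

end Prob


/-- in a `φ`-smooth congestion game with `n` players and `m ≥ 2` resources
(the `n·m` resource cost values being independent `φ`-smooth random variables), for any
`ε > 0` the expected length `E[T]` of the longest sequence of consecutive `(1+ε)`-improving
moves satisfies `E[T] ≤ φ·(1 + 1/ε)·m·n·(m+1)·m·n·ln(m·n) + 1`. -/
theorem smoothed_general_congestion_brd_bound
    {Ω : Type*} [MeasurableSpace Ω] (P : Measure Ω) [IsProbabilityMeasure P]
    {n m : ℕ} (hn : 0 < n) (hm : 2 ≤ m)
    (φ : ℝ) (hφ : 1 ≤ φ)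
    (strat : Fin n → Set (Finset (Fin m)))
    (hstrat : ∀ i, (strat i).Nonempty)
    (hstrat' : ∀ i, ∀ t ∈ strat i, t.Nonempty)
    (c : Fin m × Fin n → Ω → ℝ)
    (hsmooth : ∀ p, PhiSmooth P φ (c p))
    (hindep : iIndepFun c P)
    (ε : ℝ) (hε : 0 < ε) :
    ∫⁻ ω, (maxImprovingSeqLen strat (costOf fun p => c p ω) ε : ENNReal) ∂P
      ≤ ENNReal.ofReal
          (φ * (1 + 1 / ε) * m * n * (m + 1) * (m * n) * Real.log (m * n) + 1) := by

  classical
  haveI hne : Nonempty (Fin m × Fin n) := ⟨(⟨0, by omega⟩, ⟨0, by omega⟩)⟩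
  have hφ0 : (0:ℝ) ≤ φ := by linarith
  set B : ℕ := (n + 1) ^ m - 1 with hB
  have hBge : 3 ≤ B := by
    have h4 : 2 ^ 2 ≤ (n + 1) ^ m := by
      calc (2:ℕ) ^ 2 ≤ 2 ^ m := Nat.pow_le_pow_right (by omega) hm
        _ ≤ (n + 1) ^ m := Nat.pow_le_pow_left (by omega) m
    omega
  have hae : ∀ᵐ ω ∂P, ∀ p, c p ω ∈ Set.Icc (0:ℝ) 1 :=
    (MeasureTheory.ae_all_iff).mpr fun p => phiSmooth_unit (hsmooth p)
  -- cost properties on the good event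
  have hcost0 : ∀ ω, (∀ p, c p ω ∈ Set.Icc (0:ℝ) 1) →
      ∀ r j, 0 ≤ costOf (fun p => c p ω) r j := by
    intro ω hω r j
    rw [costOf]
    split
    · exact (hω _).1
    · exact le_refl 0
  have hcost1 : ∀ ω, (∀ p, c p ω ∈ Set.Icc (0:ℝ) 1) →
      ∀ r j, costOf (fun p => c p ω) r j ≤ 1 := by
    intro ω hω r j
    rw [costOf]
    split
    · exact (hω _).2
    · exact zero_le_one
  -- a.e. bound on T by B
  have haeB : ∀ᵐ ω ∂P, maxImprovingSeqLen strat (costOf fun p => c p ω) ε ≤ B := by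
    filter_upwards [hae] with ω hω
    exact (main_det hstrat' (hcost0 ω hω) (hcost1 ω hω) hε le_rfl
      (fun r j h1 h2 => hcost0 ω hω r j)).1
  by_cases h3 : 3 ≤ m * n
  · -- main case
    set E : ℕ → Set Ω := fun t =>
      ⋃ p : Fin m × Fin n, c p ⁻¹' Set.Iic (((m:ℝ) * n) / (ε * t)) with hE
    have hEmeas : ∀ t, MeasurableSet (E t) := fun t =>
      MeasurableSet.iUnion fun p => (hsmooth p).1 measurableSet_Iic
    have hpt : ∀ᵐ ω ∂P,
        (maxImprovingSeqLen strat (costOf fun p => c p ω) ε : ℝ≥0∞)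
          ≤ ∑ t ∈ Finset.Icc 1 B, (E t).indicator (fun _ => (1:ℝ≥0∞)) ω := by
      filter_upwards [hae] with ω hω
      have hu : (Finset.univ : Finset (Fin m × Fin n)).Nonempty := Finset.univ_nonempty
      set Δ : ℝ := Finset.univ.inf' hu (fun p : Fin m × Fin n => c p ω) with hΔdef
      have hΔ0 : 0 ≤ Δ := Finset.le_inf' hu _ fun p _ => (hω p).1
      have hΔc : ∀ r j, 1 ≤ j → j ≤ n → Δ ≤ costOf (fun p => c p ω) r j := by
        intro r j h1 h2
        rw [costOf, dif_pos ⟨h1, h2⟩]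
        exact Finset.inf'_le _ (Finset.mem_univ _)
      obtain ⟨hT1, hT2⟩ := main_det hstrat' (hcost0 ω hω) (hcost1 ω hω) hε hΔ0 hΔc
      set T := maxImprovingSeqLen strat (costOf fun p => c p ω) ε with hT
      have hmemE : ∀ t ∈ Finset.Icc 1 T, ω ∈ E t := by
        intro t ht
        rw [Finset.mem_Icc] at ht
        obtain ⟨p, _, hpΔ⟩ := Finset.exists_mem_eq_inf' hu (fun p : Fin m × Fin n => c p ω)
        refine Set.mem_iUnion.mpr ⟨p, ?_⟩
        simp only [Set.mem_preimage, Set.mem_Iic]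
        have htpos : (0:ℝ) < t := by exact_mod_cast Nat.lt_of_lt_of_le Nat.zero_lt_one ht.1
        rw [← hpΔ, le_div_iff₀ (mul_pos hε htpos)]
        have htT : (t:ℝ) ≤ (T:ℝ) := by exact_mod_cast ht.2
        have h5 : (t:ℝ) * (ε * Δ) ≤ (T:ℝ) * (ε * Δ) :=
          mul_le_mul_of_nonneg_right htT (mul_nonneg hε.le hΔ0)
        have h6 : Δ * (ε * (t:ℝ)) = (t:ℝ) * (ε * Δ) := by ring
        rw [h6]
        linarith
      calc ((T : ℕ) : ℝ≥0∞)
          = ∑ t ∈ Finset.Icc 1 T, (E t).indicator (fun _ => (1:ℝ≥0∞)) ω := by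
            rw [Finset.sum_congr rfl fun t ht => Set.indicator_of_mem (hmemE t ht) _]
            simp [Nat.card_Icc]
        _ ≤ ∑ t ∈ Finset.Icc 1 B, (E t).indicator (fun _ => (1:ℝ≥0∞)) ω :=
            Finset.sum_le_sum_of_subset (Finset.Icc_subset_Icc_right hT1)
    have hint : ∫⁻ ω, (maxImprovingSeqLen strat (costOf fun p => c p ω) ε : ℝ≥0∞) ∂P
        ≤ ∑ t ∈ Finset.Icc 1 B, P (E t) := by
      refine le_trans (lintegral_mono_ae hpt) ?_
      rw [lintegral_finset_sum _ fun t _ => measurable_const.indicator (hEmeas t)]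
      refine le_of_eq (Finset.sum_congr rfl fun t _ => ?_)
      rw [lintegral_indicator (hEmeas t), setLIntegral_const, one_mul]
    set K : ℝ := φ * ((m:ℝ) * n) ^ 2 / ε with hK
    have hK0 : 0 ≤ K := by
      apply div_nonneg _ hε.le
      positivity
    have hPE : ∀ t ∈ Finset.Icc 1 B, P (E t) ≤ ENNReal.ofReal (K * ((t:ℝ))⁻¹) := by
      intro t ht
      rw [Finset.mem_Icc] at ht
      have ht1 : (1:ℝ) ≤ (t:ℝ) := by exact_mod_cast ht.1
      have hx0 : (0:ℝ) ≤ ((m:ℝ) * n) / (ε * t) := by positivity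
      calc P (E t) ≤ ∑' p : Fin m × Fin n, P (c p ⁻¹' Set.Iic (((m:ℝ) * n) / (ε * t))) :=
            measure_iUnion_le _
        _ = ∑ p : Fin m × Fin n, P (c p ⁻¹' Set.Iic (((m:ℝ) * n) / (ε * t))) := tsum_fintype _
        _ ≤ ∑ _p : Fin m × Fin n, ENNReal.ofReal (φ * (((m:ℝ) * n) / (ε * t))) :=
            Finset.sum_le_sum fun p _ => phiSmooth_tail (hsmooth p) hφ0 hx0
        _ = (m * n : ℕ) * ENNReal.ofReal (φ * (((m:ℝ) * n) / (ε * t))) := by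
            simp [Finset.sum_const, mul_comm]
        _ = ENNReal.ofReal ((m * n : ℕ) * (φ * (((m:ℝ) * n) / (ε * t)))) := by
            rw [← ENNReal.ofReal_natCast (m * n), ← ENNReal.ofReal_mul (by positivity)]
        _ = ENNReal.ofReal (K * ((t:ℝ))⁻¹) := by
            congr 1
            rw [hK]
            push_cast
            field_simp
    have hhar : ∑ t ∈ Finset.Icc 1 B, ((t:ℝ))⁻¹ ≤ 1 + Real.log B := by
      have h1 := harmonic_le_one_add_log B
      have h2 : ((harmonic B : ℚ):ℝ) = ∑ t ∈ Finset.Icc 1 B, ((t:ℝ))⁻¹ := by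
        rw [harmonic_eq_sum_Icc]
        push_cast
        ring
      linarith
    have hL1 : 1 ≤ Real.log ((m:ℝ) * n) := by
      rw [Real.le_log_iff_exp_le (by positivity)]
      calc Real.exp 1 ≤ 2.7182818286 := Real.exp_one_lt_d9.le
        _ ≤ 3 := by norm_num
        _ ≤ (m:ℝ) * n := by exact_mod_cast h3
    have hL0 : 0 ≤ Real.log ((m:ℝ) * n) := by linarith
    have hlogB : Real.log B ≤ (m:ℝ) * Real.log ((m:ℝ) * n) := by
      have hmn1 : n + 1 ≤ m * n := by
        have := Nat.mul_le_mul_right n hm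
        omega
      have hBle : B ≤ (m * n) ^ m := by
        calc B ≤ (n + 1) ^ m := by omega
          _ ≤ (m * n) ^ m := Nat.pow_le_pow_left hmn1 m
      have hcast : (B:ℝ) ≤ (((m * n) ^ m : ℕ) : ℝ) := by exact_mod_cast hBle
      have hBpos : (0:ℝ) < B := by
        have : (0:ℕ) < B := by omega
        exact_mod_cast this
      calc Real.log B ≤ Real.log (((m * n) ^ m : ℕ) : ℝ) :=
            Real.log_le_log hBpos hcast
        _ = (m:ℝ) * Real.log ((m:ℝ) * n) := by
            rw [Nat.cast_pow, Real.log_pow, Nat.cast_mul]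
    have hnum : ∑ t ∈ Finset.Icc 1 B, K * ((t:ℝ))⁻¹
        ≤ φ * (1 + 1 / ε) * m * n * (m + 1) * (m * n) * Real.log (m * n) + 1 := by
      set L : ℝ := Real.log ((m:ℝ) * n) with hL
      have hC0 : 0 ≤ φ * ((m:ℝ) * n) ^ 2 * (((m:ℝ) + 1) * L) := by
        apply mul_nonneg
        · positivity
        · apply mul_nonneg _ hL0
          positivity
      calc ∑ t ∈ Finset.Icc 1 B, K * ((t:ℝ))⁻¹
          = K * ∑ t ∈ Finset.Icc 1 B, ((t:ℝ))⁻¹ := by rw [Finset.mul_sum]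
        _ ≤ K * (1 + Real.log B) := by
            apply mul_le_mul_of_nonneg_left hhar hK0
        _ ≤ K * (((m:ℝ) + 1) * L) := by
            apply mul_le_mul_of_nonneg_left _ hK0
            have hexp : ((m:ℝ) + 1) * L = (m:ℝ) * L + L := by ring
            rw [hexp]
            linarith
        _ = (φ * ((m:ℝ) * n) ^ 2 * (((m:ℝ) + 1) * L)) * (1 / ε) := by
            rw [hK]; ring
        _ ≤ (φ * ((m:ℝ) * n) ^ 2 * (((m:ℝ) + 1) * L)) * (1 + 1 / ε) :=
            mul_le_mul_of_nonneg_left (by linarith) hC0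
        _ = φ * (1 + 1 / ε) * m * n * (m + 1) * (m * n) * L := by ring
        _ ≤ φ * (1 + 1 / ε) * m * n * (m + 1) * (m * n) * L + 1 := by linarith
    calc ∫⁻ ω, (maxImprovingSeqLen strat (costOf fun p => c p ω) ε : ℝ≥0∞) ∂P
        ≤ ∑ t ∈ Finset.Icc 1 B, P (E t) := hint
      _ ≤ ∑ t ∈ Finset.Icc 1 B, ENNReal.ofReal (K * ((t:ℝ))⁻¹) := Finset.sum_le_sum hPE
      _ = ENNReal.ofReal (∑ t ∈ Finset.Icc 1 B, K * ((t:ℝ))⁻¹) := by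
          rw [ENNReal.ofReal_sum_of_nonneg]
          intro t ht
          positivity
      _ ≤ _ := ENNReal.ofReal_le_ofReal hnum
  · -- small case : m = 2, n = 1
    have hm2 : m = 2 := by nlinarith [Nat.one_le_iff_ne_zero.mpr (Nat.pos_iff_ne_zero.mp hn)]
    have hn1 : n = 1 := by nlinarith
    subst hm2; subst hn1
    have hB3 : B = 3 := by norm_num [hB]
    have hbound : ∫⁻ ω, (maxImprovingSeqLen strat (costOf fun p => c p ω) ε : ℝ≥0∞) ∂P
        ≤ (3 : ℝ≥0∞) := by
      have : ∀ᵐ ω ∂P, (maxImprovingSeqLen strat (costOf fun p => c p ω) ε : ℝ≥0∞)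
          ≤ (3 : ℝ≥0∞) := by
        filter_upwards [haeB] with ω hω
        rw [hB3] at hω
        exact_mod_cast Nat.cast_le.mpr hω
      calc ∫⁻ ω, (maxImprovingSeqLen strat (costOf fun p => c p ω) ε : ℝ≥0∞) ∂P
          ≤ ∫⁻ _, (3:ℝ≥0∞) ∂P := lintegral_mono_ae this
        _ = 3 := by simp
    refine le_trans hbound ?_
    have hlog2 : (0.6931471803:ℝ) < Real.log 2 := Real.log_two_gt_d9
    have h1ε : (1:ℝ) ≤ 1 + 1/ε := by
      have : 0 < 1/ε := by positivity
      linarith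
    have hfe : (1:ℝ) ≤ φ * (1 + 1/ε) := one_le_mul_of_one_le_of_one_le hφ h1ε
    have hreal : (3:ℝ) ≤ φ * (1 + 1 / ε) * 2 * 1 * (2 + 1) * (2 * 1) * Real.log (2 * 1) + 1 := by
      have h12 : φ * (1 + 1 / ε) * 2 * 1 * (2 + 1) * (2 * 1) * Real.log (2 * 1)
          = (φ * (1 + 1/ε)) * (12 * Real.log 2) := by
        norm_num
        ring
      rw [h12]
      nlinarith [mul_le_mul hfe (by linarith : (8:ℝ) ≤ 12 * Real.log 2) (by norm_num) (by linarith : (0:ℝ) ≤ φ * (1+1/ε))]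
    calc (3:ℝ≥0∞) = ENNReal.ofReal 3 := by norm_num
      _ ≤ _ := by
        apply ENNReal.ofReal_le_ofReal
        push_cast
        exact hreal
end
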